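/- For any permutation T of the vertex set {0,1,...,n} of the complete graph K_{n+1}, the sum over all nonempty T-invariant subsets y of the index i_T(y) = (-1)^{|y|-1} · sign(T restricted to y) equals 1, where sign denotes the signature of the permutation T|y. -/

import Mathlib

/-!
Write `F(y) = (-1)^{|y|} sign(T|y)` for invariant `y`, so that `i_T(y) = -F(y)` for `y ≠ ∅`.
`F` is multiplicative over disjoint invariant sets and equals `-1` on every cycle `C` of `T`.
Every invariant set either contains `C` or is disjoint from it, so `y ↦ y ∆ C` is a
sign-reversing involution of the invariant sets, and `∑_y F(y) = 0`. Removing `F(∅) = 1`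
leaves `∑_{y ≠ ∅} i_T(y) = 1`.
-/

open scoped Classical

/-- The index `i_T(y) = (-1)^{|y|-1} sign(T|y)` of a permutation `T` at an invariant
subset `y` (and `0` at non-invariant subsets). -/
noncomputable def permIndex {α : Type*} [Fintype α] [DecidableEq α]
    (T : Equiv.Perm α) (y : Finset α) : ℤ :=
  if h : ∀ x, x ∈ y ↔ T x ∈ y then
    (-1) ^ (y.card - 1) * (Equiv.Perm.sign (T.subtypePerm (fun x => (h x).symm) : Equiv.Perm {x // x ∈ y}) : ℤ)
  else 0

open Finset
open scoped symmDiff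

namespace Equiv.Perm

variable {α : Type*}

lemma SameCycle.mem_iff_of_invariant {T : Perm α} {y : Finset α} (hy : ∀ x, x ∈ y ↔ T x ∈ y)
    {x z : α} (h : T.SameCycle x z) : x ∈ y ↔ z ∈ y := by
  suffices key : ∀ {x z}, T.SameCycle x z → x ∈ y → z ∈ y from ⟨key h, key h.symm⟩
  rintro x z ⟨k, rfl⟩ hx
  rw [← subtypePerm_apply_zpow_of_mem (fun x => (hy x).symm) hx]
  exact Subtype.property _

variable [DecidableEq α]

lemma ofSubtype_subtypePerm_union {T : Perm α} {a b : Finset α} (hd : _root_.Disjoint a b)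
    (ha : ∀ x, T x ∈ a ↔ x ∈ a) (hb : ∀ x, T x ∈ b ↔ x ∈ b)
    (hab : ∀ x, T x ∈ a ∪ b ↔ x ∈ a ∪ b) :
    ofSubtype (T.subtypePerm hab) =
      ofSubtype (T.subtypePerm ha) * ofSubtype (T.subtypePerm hb) := by
  ext x
  rw [mul_apply]
  by_cases hxa : x ∈ a
  · have hxb : x ∉ b := disjoint_left.1 hd hxa
    rw [ofSubtype_subtypePerm_of_not_mem hb hxb, ofSubtype_subtypePerm_of_mem ha hxa,
      ofSubtype_subtypePerm_of_mem hab (mem_union_left b hxa)]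
  by_cases hxb : x ∈ b
  · have hTxa : T x ∉ a := fun h => disjoint_left.1 hd h ((hb x).2 hxb)
    rw [ofSubtype_subtypePerm_of_mem hb hxb, ofSubtype_subtypePerm_of_not_mem ha hTxa,
      ofSubtype_subtypePerm_of_mem hab (mem_union_right a hxb)]
  · rw [ofSubtype_subtypePerm_of_not_mem hb hxb, ofSubtype_subtypePerm_of_not_mem ha hxa,
      ofSubtype_subtypePerm_of_not_mem hab (by simp [hxa, hxb])]

lemma invariant_symmDiff {T : Perm α} {y c : Finset α} (hy : ∀ x, x ∈ y ↔ T x ∈ y)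
    (hc : ∀ x, x ∈ c ↔ T x ∈ c) : ∀ x, x ∈ y ∆ c ↔ T x ∈ y ∆ c := fun x => by
  simp only [mem_symmDiff, hy x, hc x]

variable [Fintype α]

/-- `(-1)^{|y|} sign(T|y)`. Unlike `permIndex`, whose exponent `#y - 1` truncates at `y = ∅`,
this is multiplicative over disjoint invariant sets. -/
noncomputable def twistedSign (T : Perm α) (y : Finset α) : ℤ :=
  if h : ∀ x, x ∈ y ↔ T x ∈ y then
    (-1) ^ #y * (sign (T.subtypePerm (fun x => (h x).symm) : Perm {x // x ∈ y}) : ℤ)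
  else 0

def cycleSet (T : Perm α) (a : α) : Finset α := {x | T.SameCycle a x}

lemma twistedSign_union {T : Perm α} {a b : Finset α} (hd : _root_.Disjoint a b)
    (ha : ∀ x, x ∈ a ↔ T x ∈ a) (hb : ∀ x, x ∈ b ↔ T x ∈ b) :
    twistedSign T (a ∪ b) = twistedSign T a * twistedSign T b := by
  have hab : ∀ x, x ∈ a ∪ b ↔ T x ∈ a ∪ b := fun x => by simp only [mem_union, ha x, hb x]
  rw [twistedSign, twistedSign, twistedSign, dif_pos hab, dif_pos ha, dif_pos hb,
    ← sign_ofSubtype, ← sign_ofSubtype, ← sign_ofSubtype,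
    ofSubtype_subtypePerm_union hd (fun x => (ha x).symm) (fun x => (hb x).symm),
    map_mul, card_union_of_disjoint hd, pow_add]
  push_cast
  ring

lemma twistedSign_empty (T : Perm α) : twistedSign T ∅ = 1 := by
  rw [twistedSign, dif_pos (by simp), card_empty, pow_zero, one_mul, Subsingleton.elim (T.subtypePerm _) 1, map_one, Units.val_one]

lemma permIndex_eq_neg_twistedSign (T : Perm α) {y : Finset α} (hy : y.Nonempty) :
    permIndex T y = -twistedSign T y := by
  obtain ⟨k, hk⟩ := Nat.exists_eq_add_one_of_ne_zero (card_pos.2 hy).ne'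
  unfold permIndex twistedSign
  split_ifs
  · rw [hk, Nat.add_sub_cancel, pow_succ]
    ring
  · simp

lemma mem_cycleSet {T : Perm α} {a x : α} : x ∈ T.cycleSet a ↔ T.SameCycle a x := by
  simp [cycleSet]

lemma cycleSet_invariant (T : Perm α) (a : α) :
    ∀ x, x ∈ T.cycleSet a ↔ T x ∈ T.cycleSet a := fun _ => by
  rw [mem_cycleSet, mem_cycleSet, sameCycle_apply_right]

lemma ofSubtype_subtypePerm_cycleSet (T : Perm α) (a : α) :
    ofSubtype (T.subtypePerm fun x => (cycleSet_invariant T a x).symm) = T.cycleOf a := by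
  ext x
  rw [cycleOf_apply]
  split_ifs with h
  · exact ofSubtype_subtypePerm_of_mem _ (mem_cycleSet.2 h)
  · exact ofSubtype_subtypePerm_of_not_mem _ (mt mem_cycleSet.1 h)

lemma sign_cycleOf (T : Perm α) (a : α) : sign (T.cycleOf a) = -(-1) ^ #(T.cycleSet a) := by
  by_cases hfix : T a = a
  · have hsingle : T.cycleSet a = {a} := by
      ext x
      rw [mem_cycleSet, mem_singleton]
      exact ⟨fun h => (h.eq_of_left hfix).symm, fun h => h ▸ SameCycle.refl T a⟩
    rw [(cycleOf_eq_one_iff T).2 hfix, hsingle]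
    simp
  · rw [(isCycle_cycleOf T hfix).sign]
    congr 3
    ext x
    rw [mem_support_cycleOf_iff, mem_cycleSet, mem_support]
    exact and_iff_left hfix

lemma twistedSign_cycleSet (T : Perm α) (a : α) : twistedSign T (T.cycleSet a) = -1 := by
  rw [twistedSign, dif_pos (cycleSet_invariant T a), ← sign_ofSubtype,
    ofSubtype_subtypePerm_cycleSet, sign_cycleOf]
  push_cast
  rw [mul_neg, ← mul_pow, neg_one_mul, neg_neg, one_pow]

lemma twistedSign_symmDiff_cycleSet (T : Perm α) (a : α) (y : Finset α) :
    twistedSign T (y ∆ T.cycleSet a) = -twistedSign T y := by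
  have hc := cycleSet_invariant T a
  set c := T.cycleSet a
  by_cases hy : ∀ x, x ∈ y ↔ T x ∈ y
  · by_cases ha : a ∈ y
    · have hcy : c ⊆ y := fun x hx => (SameCycle.mem_iff_of_invariant hy (mem_cycleSet.1 hx)).1 ha
      have hsplit := twistedSign_union (sdiff_disjoint : _root_.Disjoint (y \ c) c)
        (fun x => by simp only [mem_sdiff, hy x, hc x]) hc
      rw [sdiff_union_of_subset hcy, twistedSign_cycleSet] at hsplit
      rw [symmDiff_of_ge hcy, hsplit]
      ring
    · have hyc : _root_.Disjoint y c := disjoint_left.2 fun x hxy hxc =>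
        ha ((SameCycle.mem_iff_of_invariant hy (mem_cycleSet.1 hxc)).2 hxy)
      rw [hyc.symmDiff_eq_sup, sup_eq_union, twistedSign_union hyc hy hc, twistedSign_cycleSet]
      ring
  · have hyc : ¬ ∀ x, x ∈ y ∆ c ↔ T x ∈ y ∆ c := fun h =>
      hy (by simpa only [symmDiff_symmDiff_cancel_right] using invariant_symmDiff h hc)
    rw [twistedSign, twistedSign, dif_neg hy, dif_neg hyc, neg_zero]

lemma sum_twistedSign_eq_zero [Nonempty α] (T : Perm α) : ∑ y : Finset α, twistedSign T y = 0 := by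
  have h := Equiv.sum_comp
    (symmDiff_left_involutive (T.cycleSet (Classical.arbitrary α))).toPerm (twistedSign T)
  simp only [Function.Involutive.coe_toPerm, twistedSign_symmDiff_cycleSet,
    sum_neg_distrib] at h
  linarith

theorem sum_permIndex_nonempty_invariant [Nonempty α] (T : Perm α) :
    ∑ y ∈ univ.filter (fun y : Finset α => y.Nonempty ∧ ∀ x, x ∈ y ↔ T x ∈ y), permIndex T y
      = 1 := by
  have hsplit := add_sum_erase univ (twistedSign T) (mem_univ ∅)
  rw [sum_twistedSign_eq_zero, twistedSign_empty] at hsplit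
  have hrestrict : ∑ y ∈ univ.filter (fun y : Finset α => y.Nonempty ∧ ∀ x, x ∈ y ↔ T x ∈ y),
      twistedSign T y = ∑ y ∈ univ.erase ∅, twistedSign T y := by
    refine sum_subset (fun y hy => ?_) (fun y hy hyP => ?_)
    · simpa [nonempty_iff_ne_empty] using (mem_filter.1 hy).2.1
    · have hne : y.Nonempty := nonempty_iff_ne_empty.2 (ne_of_mem_erase hy)
      exact dif_neg fun hinv => hyP (mem_filter.2 ⟨mem_univ y, hne, hinv⟩)
  rw [sum_congr rfl fun y hy => permIndex_eq_neg_twistedSign T (mem_filter.1 hy).2.1,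
    sum_neg_distrib, hrestrict]
  linarith

end Equiv.Perm

/-- For any permutation `T` of the vertex set of the complete graph `K_{n+1}`, the sum of
the indices `i_T(y) = (-1)^{|y|-1} sign(T|y)` over all nonempty `T`-invariant subsets `y`
equals `1`. -/
theorem sum_permIndex_complete_graph (n : ℕ) (T : Equiv.Perm (Fin (n + 1))) :
    ∑ y ∈ Finset.univ.filter (fun y : Finset (Fin (n + 1)) =>
        y.Nonempty ∧ ∀ x, x ∈ y ↔ T x ∈ y), permIndex T y = 1 := by
  -- `convert` reconciles the two decidability instances of `∀ x : Fin (n + 1), _`.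
  convert T.sum_permIndex_nonempty_invariant
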